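/- Let N ≥ 1, m ≥ 1, let Λ_1 ≥ Λ_2 ≥ ... ≥ Λ_N > 0 be real numbers, set q := min(m, N), let r be the Witsenhausen index of (Λ_1,...,Λ_q), and let μ := (1/r)(1 + Σ_{j=1}^r 1/Λ_j). Define the greedy allocation recursively: n^{(0)} = (0,...,0), and n^{(t+1)} is obtained from n^{(t)} by adding 1 to the coordinate i_t, where i_t is the smallest index i ∈ {1,...,N} minimizing 1/Λ_i + n^{(t)}_i/m. Then the final greedy allocation n^{(m)} satisfies: for every k with n^{(m)}_k > 0, μ − 1/m < n^{(m)}_k/m + 1/Λ_k < μ + 1/m, and n^{(m)}_i = 0 for all i > r. -/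

import Mathlib

open scoped Classical in
/-- The index (smallest, among those of lowest current height `1/Λ_i + n_i/m`)
in `S` to which the greedy block-filling policy adds the next block. -/
noncomputable def greedyStep (Λ : ℕ → ℝ) (m : ℕ) (S : Finset ℕ) (n : ℕ → ℕ) : ℕ :=
  let height : ℕ → ℝ := fun i => 1 / Λ i + (n i : ℝ) / m
  let T := S.filter fun i => ∀ j ∈ S, height i ≤ height j
  if h : T.Nonempty then T.min' h else 0

/-- The greedy block-filling allocation after `t` steps: start from the zero
allocation and at each step add one block to the channel in `S` of currently
lowest height, breaking ties by smallest index. -/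
noncomputable def greedyAlloc (Λ : ℕ → ℝ) (m : ℕ) (S : Finset ℕ) : ℕ → ℕ → ℕ
  | 0, _ => 0
  | t + 1, i =>
    greedyAlloc Λ m S t i + if i = greedyStep Λ m S (greedyAlloc Λ m S t) then 1 else 0

/-!
Write `1/Λ_i + n_i/m` for the height of channel `i`. The gaps `μ - 1/Λ_j`, `j ≤ r`, add up to `1`,
so while fewer than `m` blocks are placed some channel `j ≤ r` lies below `μ`: every block is
placed on a channel of height `< μ`, and a loaded channel ends below `μ + 1/m`.

No block goes to a channel `i > r`. If `r < q`, then already `μ ≤ 1/Λ_{r+1} ≤ 1/Λ_i`. Otherwise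
`r = m`, and by the tie-breaking rule the greedy step passes over a channel `j ≤ r` only when `j`
already holds a block, so at least `m` blocks would have been placed.

Hence all `m` blocks sit in channels `1, …, r` and the filled amounts `n_j/m` add up to
`1 = ∑ (μ - 1/Λ_j)`. A loaded channel ending at or below `μ - 1/m` would force every loaded channel
to end at or below `μ` (each one was lowest when it last received a block), and the sum would
fall short of `1`.
-/

open Finset

noncomputable def channelHeight (Λ : ℕ → ℝ) (m : ℕ) (n : ℕ → ℕ) (i : ℕ) : ℝ :=
  1 / Λ i + (n i : ℝ) / m

noncomputable def waterLevel (Λ : ℕ → ℝ) (r : ℕ) : ℝ := 1 / (r : ℝ) * (1 + ∑ j ∈ Icc 1 r, 1 / Λ j)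

section ChannelHeight

variable {Λ : ℕ → ℝ} {m : ℕ}

lemma one_div_le_channelHeight (n : ℕ → ℕ) (i : ℕ) : 1 / Λ i ≤ channelHeight Λ m n i :=
  le_add_of_nonneg_right (by positivity)

lemma channelHeight_le_channelHeight {n n' : ℕ → ℕ} {i : ℕ} (h : n i ≤ n' i) :
    channelHeight Λ m n i ≤ channelHeight Λ m n' i := by
  unfold channelHeight
  gcongr

end ChannelHeight

section Greedy

variable {Λ : ℕ → ℝ} {m : ℕ} {S : Finset ℕ}

open scoped Classical in
lemma greedyStep_eq_min' (n : ℕ → ℕ)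
    (hne : (S.filter fun i => ∀ j ∈ S, channelHeight Λ m n i ≤ channelHeight Λ m n j).Nonempty) :
    greedyStep Λ m S n =
      (S.filter fun i => ∀ j ∈ S, channelHeight Λ m n i ≤ channelHeight Λ m n j).min' hne :=
  dif_pos hne

open scoped Classical in
lemma greedyStep_mem_filter (hS : S.Nonempty) (n : ℕ → ℕ) :
    greedyStep Λ m S n ∈
      S.filter fun i => ∀ j ∈ S, channelHeight Λ m n i ≤ channelHeight Λ m n j := by
  obtain ⟨i₀, hi₀, hmin⟩ := S.exists_min_image (channelHeight Λ m n) hS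
  have hne : (S.filter fun i => ∀ j ∈ S, channelHeight Λ m n i ≤ channelHeight Λ m n j).Nonempty :=
    ⟨i₀, mem_filter.mpr ⟨hi₀, hmin⟩⟩
  rw [greedyStep_eq_min' n hne]
  exact min'_mem _ hne

lemma greedyStep_mem (hS : S.Nonempty) (n : ℕ → ℕ) : greedyStep Λ m S n ∈ S :=
  (mem_filter.mp (greedyStep_mem_filter hS n)).1

lemma channelHeight_greedyStep_le (n : ℕ → ℕ) {j : ℕ} (hj : j ∈ S) :
    channelHeight Λ m n (greedyStep Λ m S n) ≤ channelHeight Λ m n j :=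
  (mem_filter.mp (greedyStep_mem_filter ⟨j, hj⟩ n)).2 j hj

open scoped Classical in
lemma greedyStep_le_of_channelHeight_le (n : ℕ → ℕ) {j : ℕ} (hj : j ∈ S)
    (h : channelHeight Λ m n j ≤ channelHeight Λ m n (greedyStep Λ m S n)) :
    greedyStep Λ m S n ≤ j := by
  have hmem := greedyStep_mem_filter (Λ := Λ) (m := m) ⟨j, hj⟩ n
  rw [greedyStep_eq_min' n ⟨_, hmem⟩] at h hmem ⊢
  exact min'_le _ _ (mem_filter.mpr ⟨hj, fun l hl => h.trans ((mem_filter.mp hmem).2 l hl)⟩)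

lemma pos_of_lt_greedyStep (n : ℕ → ℕ) {j : ℕ} (hj : j ∈ S) (hlt : j < greedyStep Λ m S n)
    (hbase : 1 / Λ j ≤ 1 / Λ (greedyStep Λ m S n)) : 0 < n j := by
  by_contra! hzero
  have hle : channelHeight Λ m n j ≤ channelHeight Λ m n (greedyStep Λ m S n) := by
    calc channelHeight Λ m n j = 1 / Λ j := by simp [channelHeight, Nat.le_zero.mp hzero]
      _ ≤ 1 / Λ (greedyStep Λ m S n) := hbase
      _ ≤ _ := one_div_le_channelHeight n _
  exact (greedyStep_le_of_channelHeight_le n hj hle).not_gt hlt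

lemma greedyAlloc_succ (t i : ℕ) :
    greedyAlloc Λ m S (t + 1) i =
      greedyAlloc Λ m S t i + if i = greedyStep Λ m S (greedyAlloc Λ m S t) then 1 else 0 :=
  rfl

lemma sum_greedyAlloc (hS : S.Nonempty) (t : ℕ) : ∑ i ∈ S, greedyAlloc Λ m S t i = t := by
  induction t with
  | zero => simp [greedyAlloc]
  | succ t ih =>
    simp only [greedyAlloc_succ, sum_add_distrib, ih, sum_ite_eq', if_pos (greedyStep_mem hS _)]

lemma greedyAlloc_mono (i : ℕ) : Monotone fun t => greedyAlloc Λ m S t i :=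
  monotone_nat_of_le_succ fun t => by simp only [greedyAlloc_succ]; omega

lemma greedyAlloc_eq_zero_of_forall_greedyStep_ne {t i : ℕ}
    (h : ∀ s < t, greedyStep Λ m S (greedyAlloc Λ m S s) ≠ i) : greedyAlloc Λ m S t i = 0 := by
  induction t with
  | zero => rfl
  | succ t ih =>
    rw [greedyAlloc_succ, ih fun s hs => h s (by omega), if_neg (h t t.lt_succ_self).symm]

/-- `s` is the step at which channel `k` received its last block. -/
lemma exists_channelHeight_greedyAlloc_eq {t k : ℕ} (hk : 0 < greedyAlloc Λ m S t k) :
    ∃ s < t, channelHeight Λ m (greedyAlloc Λ m S t) k =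
      channelHeight Λ m (greedyAlloc Λ m S s) (greedyStep Λ m S (greedyAlloc Λ m S s)) + 1 / m := by
  induction t with
  | zero => simp [greedyAlloc] at hk
  | succ t ih =>
    by_cases hkt : k = greedyStep Λ m S (greedyAlloc Λ m S t)
    · refine ⟨t, t.lt_succ_self, ?_⟩
      simp only [channelHeight, greedyAlloc_succ, ← hkt]
      push_cast
      ring
    · have hsame : greedyAlloc Λ m S (t + 1) k = greedyAlloc Λ m S t k := by
        rw [greedyAlloc_succ, if_neg hkt, add_zero]
      obtain ⟨s, hs, heq⟩ := ih (hsame ▸ hk)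
      exact ⟨s, by omega, by rw [← heq]; simp only [channelHeight, hsame]⟩

end Greedy

section WaterLevel

variable {Λ : ℕ → ℝ} {m : ℕ} {T : Finset ℕ} {μ : ℝ}

lemma le_sum_of_le_channelHeight (hT : ∑ j ∈ T, (μ - 1 / Λ j) = 1) (hm : 0 < m) (n : ℕ → ℕ)
    (h : ∀ j ∈ T, μ ≤ channelHeight Λ m n j) : m ≤ ∑ j ∈ T, n j := by
  have hm' : (0 : ℝ) < m := by exact_mod_cast hm
  have hfill : (1 : ℝ) ≤ (∑ j ∈ T, n j : ℕ) / m := by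
    rw [← hT, Nat.cast_sum, sum_div]
    exact sum_le_sum fun j hj => by have := h j hj; simp only [channelHeight] at this; linarith
  exact_mod_cast (one_le_div hm').mp hfill

lemma sum_lt_of_channelHeight_le (hT : ∑ j ∈ T, (μ - 1 / Λ j) = 1) (hm : 0 < m) (n : ℕ → ℕ)
    (h : ∀ j ∈ T, channelHeight Λ m n j ≤ μ) {k : ℕ} (hk : k ∈ T)
    (hlt : channelHeight Λ m n k < μ) : ∑ j ∈ T, n j < m := by
  have hm' : (0 : ℝ) < m := by exact_mod_cast hm
  have hfill : ((∑ j ∈ T, n j : ℕ) : ℝ) / m < 1 := by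
    rw [← hT, Nat.cast_sum, sum_div]
    refine sum_lt_sum (fun j hj => ?_) ⟨k, hk, ?_⟩
    · have := h j hj; simp only [channelHeight] at this; linarith
    · simp only [channelHeight] at hlt; linarith
  exact_mod_cast (div_lt_one hm').mp hfill

variable {S : Finset ℕ}

lemma channelHeight_greedyStep_lt (hS : S.Nonempty) (hTS : T ⊆ S)
    (hT : ∑ j ∈ T, (μ - 1 / Λ j) = 1) {t : ℕ} (ht : t < m) :
    channelHeight Λ m (greedyAlloc Λ m S t) (greedyStep Λ m S (greedyAlloc Λ m S t)) < μ := by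
  by_contra! hge
  have hfull := le_sum_of_le_channelHeight hT (by omega) _
    fun j hj => hge.trans (channelHeight_greedyStep_le _ (hTS hj))
  have hplaced := (sum_le_sum_of_subset hTS).trans (sum_greedyAlloc (Λ := Λ) (m := m) hS t).le
  omega

lemma channelHeight_greedyAlloc_lt (hS : S.Nonempty) (hTS : T ⊆ S)
    (hT : ∑ j ∈ T, (μ - 1 / Λ j) = 1) {k : ℕ} (hk : 0 < greedyAlloc Λ m S m k) :
    channelHeight Λ m (greedyAlloc Λ m S m) k < μ + 1 / m := by
  obtain ⟨s, hs, heq⟩ := exists_channelHeight_greedyAlloc_eq hk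
  rw [heq]
  exact add_lt_add_left (channelHeight_greedyStep_lt hS hTS hT hs) _

lemma lt_channelHeight_greedyAlloc (hTS : T ⊆ S) (hT : ∑ j ∈ T, (μ - 1 / Λ j) = 1)
    (hbase : ∀ j ∈ T, 1 / Λ j ≤ μ) (hfull : ∑ j ∈ T, greedyAlloc Λ m S m j = m)
    {k : ℕ} (hkT : k ∈ T) (hk : 0 < greedyAlloc Λ m S m k) :
    μ - 1 / m < channelHeight Λ m (greedyAlloc Λ m S m) k := by
  by_contra! hlow
  have hm : 0 < m := by
    obtain ⟨s, hs, -⟩ := exists_channelHeight_greedyAlloc_eq hk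
    omega
  have hle : ∀ j ∈ T, channelHeight Λ m (greedyAlloc Λ m S m) j ≤ μ := by
    intro j hj
    rcases (greedyAlloc Λ m S m j).eq_zero_or_pos with hzero | hpos
    · simpa [channelHeight, hzero] using hbase j hj
    · obtain ⟨s, hs, heq⟩ := exists_channelHeight_greedyAlloc_eq hpos
      have hks : channelHeight Λ m (greedyAlloc Λ m S s) k ≤
          channelHeight Λ m (greedyAlloc Λ m S m) k :=
        channelHeight_le_channelHeight (greedyAlloc_mono k hs.le)
      have := channelHeight_greedyStep_le (Λ := Λ) (m := m) (greedyAlloc Λ m S s) (hTS hkT)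
      linarith
  have hstep : (0 : ℝ) < 1 / m := by positivity
  have := sum_lt_of_channelHeight_le hT hm _ hle hkT (by linarith)
  omega

end WaterLevel

section Witsenhausen

variable {Λ : ℕ → ℝ} {N m r : ℕ}

lemma sum_waterLevel_sub_one_div (Λ : ℕ → ℝ) (hr : 1 ≤ r) :
    ∑ j ∈ Icc 1 r, (waterLevel Λ r - 1 / Λ j) = 1 := by
  have hr' : (r : ℝ) ≠ 0 := by positivity
  rw [sum_sub_distrib, sum_const, Nat.card_Icc, Nat.add_sub_cancel, nsmul_eq_mul, waterLevel]
  field_simp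
  ring

lemma waterLevel_le_of_waterLevel_succ_le (hr : 1 ≤ r)
    (h : waterLevel Λ (r + 1) ≤ 1 / Λ (r + 1)) : waterLevel Λ r ≤ 1 / Λ (r + 1) := by
  have hr' : (0 : ℝ) < r := by positivity
  rw [waterLevel, sum_Icc_succ_top (by omega)] at h
  rw [waterLevel, one_div_mul_eq_div, div_le_iff₀ hr']
  rw [one_div_mul_eq_div, div_le_iff₀ (by positivity)] at h
  push_cast at h
  linarith

lemma one_div_le_one_div_of_antitone_succ (hpos : ∀ i, 1 ≤ i → i ≤ N → 0 < Λ i)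
    (hmono : ∀ i, 1 ≤ i → i + 1 ≤ N → Λ (i + 1) ≤ Λ i) {a b : ℕ} (ha : 1 ≤ a) (hab : a ≤ b)
    (hb : b ≤ N) : 1 / Λ a ≤ 1 / Λ b := by
  refine one_div_le_one_div_of_le (hpos b (ha.trans hab) hb) ?_
  induction b, hab using Nat.le_induction with
  | base => exact le_rfl
  | succ b hab ih => exact (hmono b (ha.trans hab) hb).trans (ih (by omega))

lemma greedyStep_le_of_waterLevel (hpos : ∀ i, 1 ≤ i → i ≤ N → 0 < Λ i)
    (hmono : ∀ i, 1 ≤ i → i + 1 ≤ N → Λ (i + 1) ≤ Λ i) (hr : 1 ≤ r) (hrm : r ≤ m) (hrN : r ≤ N)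
    (hdown : r + 1 ≤ min m N → waterLevel Λ (r + 1) ≤ 1 / Λ (r + 1)) {t : ℕ} (ht : t < m) :
    greedyStep Λ m (Icc 1 N) (greedyAlloc Λ m (Icc 1 N) t) ≤ r := by
  have hS : (Icc 1 N).Nonempty := nonempty_Icc.mpr (by omega)
  have hTS : Icc 1 r ⊆ Icc 1 N := Icc_subset_Icc_right hrN
  by_contra! hrc
  have hc := mem_Icc.mp (greedyStep_mem (Λ := Λ) (m := m) hS (greedyAlloc Λ m (Icc 1 N) t))
  obtain hrm | rfl := hrm.lt_or_eq
  · have hlevel := waterLevel_le_of_waterLevel_succ_le hr (hdown (by omega))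
    have hbase := one_div_le_one_div_of_antitone_succ hpos hmono (by omega) hrc hc.2
    have hlow := channelHeight_greedyStep_lt hS hTS (sum_waterLevel_sub_one_div Λ hr) ht
    linarith [one_div_le_channelHeight (Λ := Λ) (m := m) (greedyAlloc Λ m (Icc 1 N) t)
      (greedyStep Λ m (Icc 1 N) (greedyAlloc Λ m (Icc 1 N) t))]
  · have hloaded : ∀ j ∈ Icc 1 r, 1 ≤ greedyAlloc Λ r (Icc 1 N) t j := fun j hj =>
      have hj := mem_Icc.mp hj
      pos_of_lt_greedyStep _ (hTS (mem_Icc.mpr hj)) (by omega)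
        (one_div_le_one_div_of_antitone_succ hpos hmono hj.1 (by omega) hc.2)
    have hcount := card_nsmul_le_sum _ (fun j => greedyAlloc Λ r (Icc 1 N) t j) 1 hloaded
    have hplaced := (sum_le_sum_of_subset hTS).trans (sum_greedyAlloc (Λ := Λ) (m := r) hS t).le
    rw [Nat.card_Icc, Nat.add_sub_cancel, smul_eq_mul, mul_one] at hcount
    omega

end Witsenhausen

theorem greedy_allocation_heights_general
    (N m : ℕ) (Λ : ℕ → ℝ)
    (hpos : ∀ i, 1 ≤ i → i ≤ N → 0 < Λ i)
    (hmono : ∀ i, 1 ≤ i → i + 1 ≤ N → Λ (i + 1) ≤ Λ i)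
    (q : ℕ) (hq : q = min m N)
    (r : ℕ) (hr1 : 1 ≤ r) (hrq : r ≤ q)
    (hup : ∀ k, 1 ≤ k → k ≤ r →
      1 / Λ k < (1 / (k : ℝ)) * (1 + ∑ j ∈ Finset.Icc 1 k, 1 / Λ j))
    (hdown : ∀ k, r < k → k ≤ q →
      (1 / (k : ℝ)) * (1 + ∑ j ∈ Finset.Icc 1 k, 1 / Λ j) ≤ 1 / Λ k)
    (μ : ℝ) (hμ : μ = (1 / (r : ℝ)) * (1 + ∑ j ∈ Finset.Icc 1 r, 1 / Λ j))
    (g : ℕ → ℕ) (hg : g = greedyAlloc Λ m (Finset.Icc 1 N) m) :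
    (∀ k, 1 ≤ k → k ≤ N → 0 < g k →
      μ - 1 / (m : ℝ) < (g k : ℝ) / m + 1 / Λ k ∧
      (g k : ℝ) / m + 1 / Λ k < μ + 1 / (m : ℝ)) ∧
    (∀ i, r < i → i ≤ N → g i = 0) := by
  subst hq hg
  have hrm : r ≤ m := hrq.trans (min_le_left m N)
  have hrN : r ≤ N := hrq.trans (min_le_right m N)
  have hS : (Icc 1 N).Nonempty := nonempty_Icc.mpr (by omega)
  have hTS : Icc 1 r ⊆ Icc 1 N := Icc_subset_Icc_right hrN
  have hT : ∑ j ∈ Icc 1 r, (μ - 1 / Λ j) = 1 := hμ ▸ sum_waterLevel_sub_one_div Λ hr1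
  have hbase : ∀ j ∈ Icc 1 r, 1 / Λ j ≤ μ := fun j hj =>
    (one_div_le_one_div_of_antitone_succ hpos hmono (mem_Icc.mp hj).1 (mem_Icc.mp hj).2 hrN).trans
      (hμ ▸ hup r hr1 le_rfl).le
  have hzero : ∀ i, r < i → greedyAlloc Λ m (Icc 1 N) m i = 0 := fun i hi =>
    greedyAlloc_eq_zero_of_forall_greedyStep_ne fun s hs => by
      have := greedyStep_le_of_waterLevel hpos hmono hr1 hrm hrN (hdown (r + 1) r.lt_succ_self) hs
      omega
  have hfull : ∑ j ∈ Icc 1 r, greedyAlloc Λ m (Icc 1 N) m j = m := by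
    rw [sum_subset hTS fun i hiS hi => hzero i (by simp only [mem_Icc] at hiS hi; omega),
      sum_greedyAlloc hS]
  refine ⟨fun k hk1 _ hk => ?_, fun i hi _ => hzero i hi⟩
  have hkr : k ≤ r := by
    by_contra! hkr
    simp [hzero k hkr] at hk
  have hlow := lt_channelHeight_greedyAlloc hTS hT hbase hfull (mem_Icc.mpr ⟨hk1, hkr⟩) hk
  have hhigh := channelHeight_greedyAlloc_lt hS hTS hT hk
  simp only [channelHeight] at hlow hhigh
  constructor <;> linarith

/-- **Greedy block-filling allocation heights.** After `m` steps of the greedy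
policy on channels `{1, ..., N}`, every channel `k` receiving a block has final
height `n_k/m + 1/Λ_k` within `(μ − 1/m, μ + 1/m)`, and channels beyond the
Witsenhausen index `r` receive no blocks. -/
theorem greedy_allocation_heights
    (N m : ℕ) (hN : 1 ≤ N) (hm : 1 ≤ m) (Λ : ℕ → ℝ)
    (hpos : ∀ i, 1 ≤ i → i ≤ N → 0 < Λ i)
    (hmono : ∀ i, 1 ≤ i → i + 1 ≤ N → Λ (i + 1) ≤ Λ i)
    (q : ℕ) (hq : q = min m N)
    (r : ℕ) (hr1 : 1 ≤ r) (hrq : r ≤ q)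
    (hup : ∀ k, 1 ≤ k → k ≤ r →
      1 / Λ k < (1 / (k : ℝ)) * (1 + ∑ j ∈ Finset.Icc 1 k, 1 / Λ j))
    (hdown : ∀ k, r < k → k ≤ q →
      (1 / (k : ℝ)) * (1 + ∑ j ∈ Finset.Icc 1 k, 1 / Λ j) ≤ 1 / Λ k)
    (μ : ℝ) (hμ : μ = (1 / (r : ℝ)) * (1 + ∑ j ∈ Finset.Icc 1 r, 1 / Λ j))
    (g : ℕ → ℕ) (hg : g = greedyAlloc Λ m (Finset.Icc 1 N) m) :
    (∀ k, 1 ≤ k → k ≤ N → 0 < g k →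
      μ - 1 / (m : ℝ) < (g k : ℝ) / m + 1 / Λ k ∧
      (g k : ℝ) / m + 1 / Λ k < μ + 1 / (m : ℝ)) ∧
    (∀ i, r < i → i ≤ N → g i = 0) :=
  greedy_allocation_heights_general N m Λ hpos hmono q hq r hr1 hrq hup hdown μ hμ g hg
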